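/- Let q be a complex number with 0 < |q| < 1. Then ∑_{n=0}^∞ (−1)^n q^{n(n+1)/2} / (−q;q)_n = ∑_{n=0}^∞ q^{n(3n+1)/2} (1 − q^{2n+1}). -/

import Mathlib

/-!
Write `P_n = (-q;q)_n`, `a_n` and `b_n` for the terms of the two series, and
`S(m, n) = ∑_{k<n} (-1)^k q^{mk} P_k`. Since `P_{k+1} = P_k (1 + q^{k+1})`, the sums `S` telescope:
`(1 + q^m) S(m, n) + q^{m+1} S(m+1, n) = 1 - (-1)^n q^{mn} P_n`.
With this, induction on `N` gives the exact error term of the partial sums,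
`P_N ∑_{n≤N} (a_n - b_n) = (-1)^N q^{(N+1)(N+2)/2} S(N+1, N+1)`.
As `|S(N+1, N+1)| ≤ 2^{N+1}` and `|P_N| ≥ (1-|q|)^N`, the right side divided by `P_N` is
`O(C^N |q|^{N^2/2})`, so the partial sums of `∑ (a_n - b_n)` tend to `0`.
-/

open Finset

/-- The finite q-shifted factorial `(a;q)_n`. -/
noncomputable def qPoch (a q : ℂ) (n : ℕ) : ℂ := ∏ j ∈ Finset.range n, (1 - a * q ^ j)

/-- The infinite q-shifted factorial `(a;q)_∞`. -/
noncomputable def qPochInf (a q : ℂ) : ℂ := ∏' j : ℕ, (1 - a * q ^ j)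

open Filter Topology

section QPochhammer

lemma qPoch_zero (a q : ℂ) : qPoch a q 0 = 1 := by simp [qPoch]

lemma qPoch_succ (a q : ℂ) (n : ℕ) : qPoch a q (n + 1) = qPoch a q n * (1 - a * q ^ n) :=
  prod_range_succ _ _

lemma qPoch_neg_self_succ (q : ℂ) (n : ℕ) :
    qPoch (-q) q (n + 1) = qPoch (-q) q n * (1 + q ^ (n + 1)) := by
  rw [qPoch_succ]; ring

variable {a q : ℂ}

lemma norm_qPoch_le (hq : ‖q‖ ≤ 1) (n : ℕ) : ‖qPoch a q n‖ ≤ (1 + ‖a‖) ^ n := by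
  rw [qPoch, norm_prod]
  refine (prod_le_prod (fun _ _ => norm_nonneg _) fun j _ => (norm_sub_le _ _).trans ?_).trans_eq
    (by rw [prod_const, card_range])
  rw [norm_one, norm_mul, norm_pow]
  gcongr
  exact mul_le_of_le_one_right (norm_nonneg a) (pow_le_one₀ (norm_nonneg q) hq)

lemma pow_le_norm_qPoch (ha : ‖a‖ ≤ 1) (hq : ‖q‖ ≤ 1) (n : ℕ) :
    (1 - ‖a‖) ^ n ≤ ‖qPoch a q n‖ := by
  rw [qPoch, norm_prod]
  refine (prod_le_prod (fun _ _ => sub_nonneg.mpr ha) fun j _ => ?_).trans_eq'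
    (by rw [prod_const, card_range])
  refine le_trans ?_ (norm_sub_norm_le _ _)
  rw [norm_one, norm_mul, norm_pow]
  gcongr
  exact mul_le_of_le_one_right (norm_nonneg a) (pow_le_one₀ (norm_nonneg q) hq)

lemma qPoch_ne_zero (ha : ‖a‖ < 1) (hq : ‖q‖ ≤ 1) (n : ℕ) : qPoch a q n ≠ 0 :=
  norm_pos_iff.mp <| (pow_pos (sub_pos.mpr ha) n).trans_le (pow_le_norm_qPoch ha.le hq n)

lemma pow_le_norm_qPoch_neg_self (hq : ‖q‖ ≤ 1) (n : ℕ) : (1 - ‖q‖) ^ n ≤ ‖qPoch (-q) q n‖ := by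
  simpa using pow_le_norm_qPoch (a := -q) (by rwa [norm_neg]) hq n

lemma qPoch_neg_self_ne_zero (hq : ‖q‖ < 1) (n : ℕ) : qPoch (-q) q n ≠ 0 :=
  qPoch_ne_zero (by rwa [norm_neg]) hq.le n

end QPochhammer

lemma triangle_add_one (n : ℕ) : (n + 1) * (n + 2) / 2 = n * (n + 1) / 2 + (n + 1) := by
  rw [show (n + 1) * (n + 2) = n * (n + 1) + 2 * (n + 1) by ring,
    Nat.add_mul_div_left _ _ two_pos]

lemma summable_pow_mul_pow_triangle (K : ℝ) {r : ℝ} (hr0 : 0 ≤ r) (hr1 : r < 1) :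
    Summable fun n : ℕ => K ^ n * r ^ (n * (n + 1) / 2) := by
  have hratio : Tendsto (fun n : ℕ => |K| * r ^ (n + 1)) atTop (𝓝 0) := by
    simpa using ((tendsto_pow_atTop_nhds_zero_of_lt_one hr0 hr1).comp
      (tendsto_add_atTop_nat 1)).const_mul |K|
  refine summable_of_ratio_norm_eventually_le (r := 1 / 2) (by norm_num) ?_
  filter_upwards [hratio.eventually_le_const (by norm_num : (0 : ℝ) < 1 / 2)] with n hn
  calc ‖K ^ (n + 1) * r ^ ((n + 1) * (n + 1 + 1) / 2)‖
      = |K| * r ^ (n + 1) * ‖K ^ n * r ^ (n * (n + 1) / 2)‖ := by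
        simp only [norm_mul, norm_pow, Real.norm_eq_abs, abs_of_nonneg hr0, triangle_add_one n]
        ring
    _ ≤ 1 / 2 * ‖K ^ n * r ^ (n * (n + 1) / 2)‖ := by gcongr

namespace Entry942

noncomputable def lhsTerm (q : ℂ) (n : ℕ) : ℂ :=
  (-1) ^ n * q ^ (n * (n + 1) / 2) / qPoch (-q) q n

noncomputable def rhsTerm (q : ℂ) (n : ℕ) : ℂ :=
  q ^ (n * (3 * n + 1) / 2) * (1 - q ^ (2 * n + 1))

noncomputable def tailSum (q : ℂ) (m n : ℕ) : ℂ :=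
  ∑ k ∈ range n, (-1) ^ k * q ^ (m * k) * qPoch (-q) q k

lemma tailSum_succ (q : ℂ) (m n : ℕ) :
    tailSum q m (n + 1) = tailSum q m n + (-1) ^ n * q ^ (m * n) * qPoch (-q) q n :=
  sum_range_succ _ _

lemma tailSum_telescope (q : ℂ) (m n : ℕ) :
    (1 + q ^ m) * tailSum q m n + q ^ (m + 1) * tailSum q (m + 1) n
      = 1 - (-1) ^ n * q ^ (m * n) * qPoch (-q) q n := by
  induction n with
  | zero => simp [tailSum, qPoch_zero]
  | succ n ih =>
    rw [tailSum_succ, tailSum_succ, qPoch_neg_self_succ]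
    linear_combination ih

variable {q : ℂ}

lemma lhsTerm_mul_qPoch (hq : ‖q‖ < 1) (n : ℕ) :
    lhsTerm q n * qPoch (-q) q n = (-1) ^ n * q ^ (n * (n + 1) / 2) :=
  div_mul_cancel₀ _ (qPoch_neg_self_ne_zero hq n)

lemma partialSum_mul_qPoch (hq : ‖q‖ < 1) (N : ℕ) :
    (∑ n ∈ range (N + 1), (lhsTerm q n - rhsTerm q n)) * qPoch (-q) q N
      = (-1) ^ N * q ^ ((N + 1) * (N + 2) / 2) * tailSum q (N + 1) (N + 1) := by
  induction N with
  | zero => simp [lhsTerm, rhsTerm, tailSum, qPoch_zero]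
  | succ N ih =>
    have hsign : (-1 : ℂ) ^ (N + 1) * (-1) ^ (N + 1) = 1 := by
      rw [← pow_add]; exact Even.neg_one_pow ⟨_, rfl⟩
    have hexp : (N + 1) * (3 * (N + 1) + 1) / 2
        = (N + 1) * (N + 2) / 2 + (N + 1) * (N + 1) := by
      rw [show (N + 1) * (3 * (N + 1) + 1) = (N + 1) * (N + 2) + 2 * ((N + 1) * (N + 1)) by ring,
        Nat.add_mul_div_left _ _ two_pos]
    have htel := tailSum_telescope q (N + 1) (N + 1)
    rw [qPoch_neg_self_succ] at htel
    rw [sum_range_succ, add_mul, sub_mul, lhsTerm_mul_qPoch hq, qPoch_neg_self_succ, ← mul_assoc,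
      ih, triangle_add_one (N + 1), rhsTerm, hexp, tailSum_succ q (N + 1 + 1) (N + 1),
      qPoch_neg_self_succ]
    -- `hsign` removes the squared sign in front of `rhsTerm q (N + 1) * qPoch (-q) q (N + 1)`.
    linear_combination (-1) ^ N * q ^ ((N + 1) * (N + 2) / 2) * htel
      + q ^ ((N + 1) * (N + 2) / 2) * q ^ ((N + 1) * (N + 1)) * qPoch (-q) q N
        * (1 + q ^ (N + 1)) * (1 - q ^ (2 * N + 3)) * hsign

lemma norm_lhsTerm_le (hq : ‖q‖ < 1) (n : ℕ) :
    ‖lhsTerm q n‖ ≤ (1 - ‖q‖)⁻¹ ^ n * ‖q‖ ^ (n * (n + 1) / 2) := by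
  rw [lhsTerm, norm_div, norm_mul, norm_pow, norm_neg, norm_one, one_pow, one_mul, norm_pow,
    inv_pow, inv_mul_eq_div]
  exact div_le_div_of_nonneg_left (by positivity) (pow_pos (by linarith) n)
    (pow_le_norm_qPoch_neg_self hq.le n)

lemma summable_lhsTerm (hq : ‖q‖ < 1) : Summable (lhsTerm q) :=
  (summable_pow_mul_pow_triangle _ (norm_nonneg q) hq).of_norm_bounded (norm_lhsTerm_le hq)

lemma summable_rhsTerm (hq : ‖q‖ < 1) : Summable (rhsTerm q) := by
  refine ((summable_geometric_of_lt_one (norm_nonneg q) hq).mul_left 2).of_norm_bounded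
    fun n => ?_
  have hexp : n ≤ n * (3 * n + 1) / 2 :=
    (Nat.le_div_iff_mul_le two_pos).mpr (by nlinarith [Nat.zero_le (n * n)])
  rw [rhsTerm, norm_mul, norm_pow, mul_comm]
  refine mul_le_mul ?_ (pow_le_pow_of_le_one (norm_nonneg q) hq.le hexp) (by positivity)
    zero_le_two
  calc ‖1 - q ^ (2 * n + 1)‖ ≤ ‖(1 : ℂ)‖ + ‖q ^ (2 * n + 1)‖ := norm_sub_le _ _
    _ ≤ 2 := by
      rw [norm_one, norm_pow]
      linarith [pow_le_one₀ (n := 2 * n + 1) (norm_nonneg q) hq.le]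

lemma norm_tailSum_le (hq : ‖q‖ ≤ 1) (m n : ℕ) : ‖tailSum q m n‖ ≤ 2 ^ n := by
  have hgeom : ∑ k ∈ range n, (2 : ℝ) ^ k = 2 ^ n - 1 := by
    have := geom_sum_mul (2 : ℝ) n
    norm_num at this
    exact this
  have hterm (k : ℕ) : ‖(-1) ^ k * q ^ (m * k) * qPoch (-q) q k‖ ≤ 2 ^ k := by
    rw [norm_mul, norm_mul, norm_pow, norm_neg, norm_one, one_pow, one_mul, norm_pow]
    calc ‖q‖ ^ (m * k) * ‖qPoch (-q) q k‖ ≤ 1 * (1 + ‖q‖) ^ k := by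
          gcongr
          · exact pow_le_one₀ (norm_nonneg q) hq
          · simpa using norm_qPoch_le (a := -q) hq k
      _ ≤ 2 ^ k := by rw [one_mul]; gcongr; linarith
  calc ‖tailSum q m n‖ ≤ ∑ k ∈ range n, (2 : ℝ) ^ k :=
        (norm_sum_le _ _).trans (sum_le_sum fun k _ => hterm k)
    _ ≤ 2 ^ n := by linarith

lemma norm_partialSum_le (hq : ‖q‖ < 1) (N : ℕ) :
    ‖∑ n ∈ range (N + 1), (lhsTerm q n - rhsTerm q n)‖
      ≤ (2 / (1 - ‖q‖)) ^ (N + 1) * ‖q‖ ^ ((N + 1) * (N + 2) / 2) := by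
  have hr : 0 < 1 - ‖q‖ := by linarith
  have hP : (1 - ‖q‖) ^ (N + 1) ≤ ‖qPoch (-q) q N‖ :=
    (pow_le_pow_of_le_one hr.le (by linarith [norm_nonneg q]) N.le_succ).trans
      (pow_le_norm_qPoch_neg_self hq.le N)
  rw [← mul_div_cancel_right₀ (∑ n ∈ range (N + 1), (lhsTerm q n - rhsTerm q n))
    (qPoch_neg_self_ne_zero hq N), partialSum_mul_qPoch hq, norm_div, norm_mul, norm_mul,
    norm_pow, norm_neg, norm_one, one_pow, one_mul, norm_pow, div_pow, div_mul_eq_mul_div,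
    mul_comm]
  exact div_le_div₀ (by positivity) (by gcongr; exact norm_tailSum_le hq.le _ _)
    (pow_pos hr _) hP

lemma tendsto_partialSum (hq : ‖q‖ < 1) :
    Tendsto (fun N => ∑ n ∈ range N, (lhsTerm q n - rhsTerm q n)) atTop (𝓝 0) := by
  rw [← tendsto_add_atTop_iff_nat 1]
  refine squeeze_zero_norm (norm_partialSum_le hq) ?_
  exact (tendsto_add_atTop_iff_nat 1).mpr
    (summable_pow_mul_pow_triangle _ (norm_nonneg q) hq).tendsto_atTop_zero

end Entry942

theorem entry_942_general (q : ℂ) (hq1 : ‖q‖ < 1) :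
    ∑' n : ℕ, (-1) ^ n * q ^ (n * (n + 1) / 2) / qPoch (-q) q n
    = ∑' n : ℕ, q ^ (n * (3 * n + 1) / 2) * (1 - q ^ (2 * n + 1)) := by
  have hA := Entry942.summable_lhsTerm hq1
  have hB := Entry942.summable_rhsTerm hq1
  have hdiff : HasSum (fun n => Entry942.lhsTerm q n - Entry942.rhsTerm q n) 0 :=
    (hA.sub hB).hasSum_iff_tendsto_nat.mpr (Entry942.tendsto_partialSum hq1)
  rw [← sub_eq_zero, ← hdiff.tsum_eq, hA.tsum_sub hB]
  rfl

/-- Entry 9.4.2 of Andrews–Berndt. -/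
theorem entry_942 (q : ℂ) (hq0 : 0 < ‖q‖) (hq1 : ‖q‖ < 1) :
    ∑' n : ℕ, (-1) ^ n * q ^ (n * (n + 1) / 2) / qPoch (-q) q n
    = ∑' n : ℕ, q ^ (n * (3 * n + 1) / 2) * (1 - q ^ (2 * n + 1)) :=
  entry_942_general q hq1
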